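/- Let τ > 0 be real and let G be a τ-critical graph. Then for every integer t > 0, there is no pure blockade (B_1, …, B_t) in G whose pattern is a cograph, of length t and of width at least |G|·t^{−1/τ}, with B_i ≠ V(G) for each i. -/

import Mathlib

open SimpleGraph

open SimpleGraph

/-- The independence (stable set) number of a graph: the clique number of the complement. -/
noncomputable def alphaNum {V : Type*} (G : SimpleGraph V) : ℕ := Gᶜ.cliqueNum

/-- The clique number of a graph. -/
noncomputable def omegaNum {V : Type*} (G : SimpleGraph V) : ℕ := G.cliqueNum

/-- κ(G) = α(G)·ω(G). -/
noncomputable def kappaNum {V : Type*} (G : SimpleGraph V) : ℕ := alphaNum G * omegaNum G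

/-- A graph `G` is `τ`-critical if `κ(G) < |G|^τ` but every proper induced subgraph `G'`
satisfies `κ(G') ≥ |G'|^τ`. -/
def TauCritical {V : Type*} [Fintype V] (τ : ℝ) (G : SimpleGraph V) : Prop :=
  (kappaNum G : ℝ) < (Fintype.card V : ℝ) ^ τ ∧
  ∀ X : Finset V, X ≠ Finset.univ →
    (X.card : ℝ) ^ τ ≤ (kappaNum (G.induce (X : Set V)) : ℝ)

/-- `A` is complete to `B`: every vertex of `A` is adjacent to every vertex of `B`. -/
def CompleteTo {V : Type*} (G : SimpleGraph V) (A B : Finset V) : Prop :=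
  ∀ a ∈ A, ∀ b ∈ B, G.Adj a b

/-- `A` is anticomplete to `B`: no vertex of `A` is adjacent to a vertex of `B`. -/
def AnticompleteTo {V : Type*} (G : SimpleGraph V) (A B : Finset V) : Prop :=
  ∀ a ∈ A, ∀ b ∈ B, ¬ G.Adj a b

/-- The pattern of a pure blockade `(B 1, …, B t)`: the graph on `Fin t` in which `i, j`
are adjacent iff `i ≠ j` and `B i` is complete to `B j`. -/
def blockadePattern {V : Type*} (G : SimpleGraph V) {t : ℕ} (B : Fin t → Finset V) :
    SimpleGraph (Fin t) where
  Adj i j := i ≠ j ∧ CompleteTo G (B i) (B j)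
  symm := by
    constructor
    rintro i j ⟨hij, h⟩
    exact ⟨hij.symm, fun a ha b hb => (h b hb a ha).symm⟩
  loopless := ⟨fun i h => h.1 rfl⟩

/-!
Every block is a proper induced subgraph, so `κ(G[Bᵢ]) ≥ |Bᵢ|^τ ≥ |G|^τ / t`, and the `t` blocks
together give `∑ κ(G[Bᵢ]) ≥ |G|^τ > κ(G)`. Conversely `κ` is superadditive over disjoint unions
that are complete (unite cliques, keep the larger stable set) or anticomplete (the reverse). By
Seinsche's theorem a `P₄`-free pattern on at least two vertices splits into two nonempty parts
that are complete or anticomplete to each other, so induction on the pattern gives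
`∑ κ(G[Bᵢ]) ≤ κ(G)`.

Seinsche's theorem is proved by deleting a vertex `v`, splitting the rest, and taking a smallest
anticomplete part `C` through a non-neighbour of `v`: if `v` has neighbours both in `C` and outside
it, then an edge of `C` between a neighbour and a non-neighbour of `v`, together with `v` and a
neighbour of `v` outside `C`, is an induced `P₄`.
-/

open Finset

section Cograph

variable {α : Type*} {H : SimpleGraph α}

def HasInducedP4On (H : SimpleGraph α) (A : Finset α) : Prop :=
  ∃ a ∈ A, ∃ b ∈ A, ∃ c ∈ A, ∃ d ∈ A,
    H.Adj a b ∧ H.Adj b c ∧ H.Adj c d ∧ ¬ H.Adj a c ∧ ¬ H.Adj b d ∧ ¬ H.Adj a d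

lemma HasInducedP4On.mono {A B : Finset α} (h : HasInducedP4On H A) (hAB : A ⊆ B) :
    HasInducedP4On H B := by
  obtain ⟨a, ha, b, hb, c, hc, d, hd, hP⟩ := h
  exact ⟨a, hAB ha, b, hAB hb, c, hAB hc, d, hAB hd, hP⟩

lemma HasInducedP4On.of_compl {A : Finset α} (h : HasInducedP4On Hᶜ A) : HasInducedP4On H A := by
  obtain ⟨a, ha, b, hb, c, hc, d, hd, hab, hbc, hcd, hac, hbd, had⟩ := h
  have adj_of_not_compl {x y : α} (hxy : x ≠ y) (h : ¬ Hᶜ.Adj x y) : H.Adj x y := by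
    simpa [compl_adj, hxy] using h
  have nac : a ≠ c := by rintro rfl; exact had hcd
  have nbd : b ≠ d := by rintro rfl; exact had hab
  have nad : a ≠ d := by rintro rfl; exact hac hcd.symm
  -- the complement of the path `a - b - c - d` is the path `c - a - d - b`
  exact ⟨c, hc, a, ha, d, hd, b, hb, (adj_of_not_compl nac hac).symm, adj_of_not_compl nad had,
    (adj_of_not_compl nbd hbd).symm, hcd.2, hab.2, fun h => hbc.2 h.symm⟩

lemma HasInducedP4On.nonempty_embedding {A : Finset α} (h : HasInducedP4On H A) :
    Nonempty (pathGraph 4 ↪g H) := by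
  obtain ⟨a, -, b, -, c, -, d, -, hab, hbc, hcd, hac, hbd, had⟩ := h
  have nac : a ≠ c := by rintro rfl; exact had hcd
  have nbd : b ≠ d := by rintro rfl; exact had hab
  have nad : a ≠ d := by rintro rfl; exact hac hcd.symm
  refine ⟨⟨⟨![a, b, c, d], fun i j hij => ?_⟩, fun {i j} => ?_⟩⟩
  · fin_cases i <;> fin_cases j <;>
      simp_all [hab.ne, hbc.ne, hcd.ne, hab.ne.symm, hbc.ne.symm, hcd.ne.symm]
  · change H.Adj (![a, b, c, d] i) (![a, b, c, d] j) ↔ (pathGraph 4).Adj i j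
    fin_cases i <;> fin_cases j <;>
      simp_all [pathGraph_adj, H.adj_comm]

lemma AnticompleteTo.symm {A B : Finset α} (h : AnticompleteTo H A B) : AnticompleteTo H B A :=
  fun b hb a ha hba => h a ha b hb hba.symm

variable [DecidableEq α]

def IsAnticompleteSplit (H : SimpleGraph α) (A X : Finset α) : Prop :=
  X.Nonempty ∧ X ⊂ A ∧ AnticompleteTo H X (A \ X)

lemma IsAnticompleteSplit.sdiff {A X : Finset α} (h : IsAnticompleteSplit H A X) :
    IsAnticompleteSplit H A (A \ X) := by
  obtain ⟨hX, hXA, hanti⟩ := h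
  refine ⟨sdiff_nonempty.2 hXA.not_subset, sdiff_ssubset hXA.subset hX, ?_⟩
  rw [Finset.sdiff_sdiff_eq_self hXA.subset]
  exact hanti.symm

lemma isAnticompleteSplit_singleton {A : Finset α} {v : α} (hv : v ∈ A) (hA : 1 < #A)
    (h : ∀ z ∈ A, ¬ H.Adj v z) : IsAnticompleteSplit H A {v} := by
  refine ⟨singleton_nonempty v, ?_, fun x hx y hy => ?_⟩
  · exact (singleton_subset_iff.2 hv).ssubset_of_ne (by rintro rfl; simp at hA)
  · rw [mem_singleton.1 hx]
    exact h y (mem_sdiff.1 hy).1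

lemma IsAnticompleteSplit.of_erase {A X : Finset α} {v : α} (hv : v ∈ A)
    (hX : IsAnticompleteSplit H (A.erase v) X) (hvX : ∀ x ∈ X, ¬ H.Adj x v) :
    IsAnticompleteSplit H A X := by
  obtain ⟨hXne, hXA, hanti⟩ := hX
  refine ⟨hXne, hXA.trans (erase_ssubset hv), fun x hx y hy => ?_⟩
  by_cases hyv : y = v
  · exact hyv ▸ hvX x hx
  · exact hanti x hx y (by simp_all)

lemma IsAnticompleteSplit.of_subset {A C D : Finset α} (hC : IsAnticompleteSplit H A C)
    (hD : D.Nonempty) (hDC : D ⊆ C) (hanti : AnticompleteTo H D (C \ D)) :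
    IsAnticompleteSplit H A D := by
  refine ⟨hD, hDC.trans_ssubset hC.2.1, fun x hx y hy => ?_⟩
  by_cases hyC : y ∈ C
  · exact hanti x hx y (mem_sdiff.2 ⟨hyC, (mem_sdiff.1 hy).2⟩)
  · exact hC.2.2 x (hDC hx) y (mem_sdiff.2 ⟨(mem_sdiff.1 hy).1, hyC⟩)

lemma IsAnticompleteSplit.exists_adj_of_minimal {A C : Finset α} {v z a : α}
    (hC : IsAnticompleteSplit H A C) (hzC : z ∈ C) (hvz : ¬ H.Adj v z)
    (hmin : ∀ D, z ∈ D → IsAnticompleteSplit H A D → #C ≤ #D) (haC : a ∈ C) (hva : H.Adj v a) :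
    ∃ a ∈ C, ∃ c ∈ C, H.Adj v a ∧ ¬ H.Adj v c ∧ H.Adj a c := by
  classical
  by_contra! hno
  -- otherwise the non-neighbours of `v` in `C` form a smaller split through `z`
  set D := C.filter (¬ H.Adj v ·)
  have hDsplit : IsAnticompleteSplit H A D := by
    refine hC.of_subset ⟨z, by simp [D, hzC, hvz]⟩ (filter_subset _ _) fun c hc a ha hca => ?_
    simp only [D, mem_sdiff, mem_filter, not_and, not_not] at hc ha
    exact hno a ha.1 c hc.1 (ha.2 ha.1) hc.2 hca.symm
  have hDC : D ⊂ C := (filter_subset _ _).ssubset_of_not_subset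
    fun h => (mem_filter.1 (h haC)).2 hva
  exact (card_lt_card hDC).not_ge (hmin D (by simp [D, hzC, hvz]) hDsplit)

lemma exists_isAnticompleteSplit_of_erase {A X : Finset α} {v : α} (hv : v ∈ A)
    (hP4 : ¬ HasInducedP4On H A) (hX : IsAnticompleteSplit H (A.erase v) X) :
    ∃ Y, IsAnticompleteSplit H A Y ∨ IsAnticompleteSplit Hᶜ A Y := by
  classical
  set A' := A.erase v
  have hA : 1 < #A := by
    rw [← card_erase_add_one hv]
    exact Nat.lt_add_of_pos_left (card_pos.2 (hX.1.mono hX.2.1.subset))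
  by_cases hcomplete : ∀ z ∈ A, z ≠ v → H.Adj v z
  · refine ⟨{v}, Or.inr (isAnticompleteSplit_singleton hv hA fun z hz hvz => ?_)⟩
    obtain ⟨hvz, hnadj⟩ := (compl_adj H v z).1 hvz
    exact hnadj (hcomplete z hz hvz.symm)
  push Not at hcomplete
  obtain ⟨z, hzA, hzv, hvz⟩ := hcomplete
  have hzA' : z ∈ A' := mem_erase.2 ⟨hzv, hzA⟩
  obtain ⟨C, hC, hCmin⟩ := exists_min_image
    (A'.powerset.filter fun C => z ∈ C ∧ IsAnticompleteSplit H A' C) card <| by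
      by_cases hzX : z ∈ X
      · exact ⟨X, by simp [hzX, hX, hX.2.1.subset, A']⟩
      · exact ⟨A' \ X, by simp [hzX, hzA', hX.sdiff]⟩
  simp only [mem_filter, mem_powerset] at hC hCmin
  obtain ⟨-, hzC, hC⟩ := hC
  by_cases hC_far : ∀ x ∈ C, ¬ H.Adj x v
  · exact ⟨C, Or.inl (hC.of_erase hv hC_far)⟩
  by_cases hC'_far : ∀ x ∈ A' \ C, ¬ H.Adj x v
  · exact ⟨A' \ C, Or.inl (hC.sdiff.of_erase hv hC'_far)⟩
  push Not at hC_far hC'_far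
  obtain ⟨a₀, ha₀C, ha₀v⟩ := hC_far
  obtain ⟨q, hqC', hqv⟩ := hC'_far
  obtain ⟨a, haC, c, hcC, hva, hvc, hac⟩ := hC.exists_adj_of_minimal hzC hvz
    (fun D hzD hD => hCmin D ⟨hD.2.1.subset, hzD, hD⟩) ha₀C ha₀v.symm
  have hsub : C ⊆ A := hC.2.1.subset.trans (erase_subset v A)
  -- `q - v - a - c` is an induced path
  exact absurd ⟨q, (sdiff_subset.trans (erase_subset v A)) hqC', v, hv, a, hsub haC, c, hsub hcC,
    hqv, hva, hac, hC.2.2 a haC q hqC' ∘ Adj.symm, hvc, hC.2.2 c hcC q hqC' ∘ Adj.symm⟩ hP4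

theorem exists_isAnticompleteSplit_of_not_hasInducedP4On {A : Finset α} (hA : 1 < #A)
    (hP4 : ¬ HasInducedP4On H A) :
    ∃ X, IsAnticompleteSplit H A X ∨ IsAnticompleteSplit Hᶜ A X := by
  induction A using strongInduction generalizing H with
  | H A ih =>
  obtain ⟨v, hv⟩ := card_pos.1 (zero_lt_one.trans hA)
  have hA' : #(A.erase v) = #A - 1 := card_erase_of_mem hv
  rcases Nat.lt_or_ge 1 #(A.erase v) with hA'1 | hA'1
  · obtain ⟨X, hX | hX⟩ := ih _ (erase_ssubset hv) hA'1 fun h => hP4 (h.mono (erase_subset v A))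
    · exact exists_isAnticompleteSplit_of_erase hv hP4 hX
    · obtain ⟨Y, hY | hY⟩ := exists_isAnticompleteSplit_of_erase hv (fun h => hP4 h.of_compl) hX
      · exact ⟨Y, Or.inr hY⟩
      · exact ⟨Y, Or.inl (compl_compl H ▸ hY)⟩
  · obtain ⟨w, hw⟩ := card_eq_one.1 (by omega : #(A.erase v) = 1)
    have hwA : ∀ z ∈ A, z ≠ v → z = w := fun z hz hzv => by
      simpa [hw] using mem_erase.2 ⟨hzv, hz⟩
    by_cases hvw : H.Adj v w
    · refine ⟨{v}, Or.inr (isAnticompleteSplit_singleton hv hA fun z hz h => ?_)⟩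
      exact h.2 (hwA z hz h.1.symm ▸ hvw)
    · refine ⟨{v}, Or.inl (isAnticompleteSplit_singleton hv hA fun z hz h => ?_)⟩
      exact hvw (hwA z hz h.ne.symm ▸ h)

end Cograph

section Kappa

variable {V : Type*} (G : SimpleGraph V)

lemma compl_induce (s : Set V) : (G.induce s)ᶜ = Gᶜ.induce s := by
  ext u v
  simp [compl_adj, Subtype.ext_iff]

lemma kappaNum_compl : kappaNum Gᶜ = kappaNum G := by
  rw [kappaNum, kappaNum, alphaNum, alphaNum, compl_compl, omegaNum, omegaNum, mul_comm]

lemma kappaNum_compl_induce (s : Set V) : kappaNum (Gᶜ.induce s) = kappaNum (G.induce s) := by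
  rw [← compl_induce, kappaNum_compl]

lemma exists_isNClique_omegaNum_induce (U : Finset V) :
    ∃ K ⊆ U, G.IsNClique (omegaNum (G.induce (U : Set V))) K := by
  obtain ⟨K, hK⟩ := (G.induce (U : Set V)).exists_isNClique_cliqueNum
  refine ⟨K.map (.subtype _), fun x hx => ?_, (isNClique_induce_iff _ _ _).1 hK⟩
  obtain ⟨y, -, rfl⟩ := mem_map.1 hx
  exact y.2

variable [Finite V]

lemma kappaNum_induce_le (s : Set V) : kappaNum (G.induce s) ≤ kappaNum G := by
  unfold kappaNum alphaNum omegaNum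
  rw [compl_induce]
  exact Nat.mul_le_mul (cliqueNum_induce_le s) (cliqueNum_induce_le s)

variable [DecidableEq V]

lemma SimpleGraph.IsClique.card_le_omegaNum_induce {K U : Finset V} (hK : G.IsClique (K : Set V))
    (hKU : K ⊆ U) : #K ≤ omegaNum (G.induce (U : Set V)) := by
  have hK' : (G.induce (U : Set V)).IsNClique #K (K.subtype (· ∈ (U : Set V))) := by
    rw [isNClique_induce_iff, subtype_map_of_mem fun x hx => mem_coe.2 (hKU hx)]
    exact ⟨hK, rfl⟩
  exact hK'.card_eq ▸ hK'.isClique.card_le_cliqueNum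

lemma omegaNum_induce_mono {U W : Finset V} (hUW : U ⊆ W) :
    omegaNum (G.induce (U : Set V)) ≤ omegaNum (G.induce (W : Set V)) := by
  obtain ⟨K, hKU, hK⟩ := exists_isNClique_omegaNum_induce G U
  exact hK.card_eq ▸ hK.isClique.card_le_omegaNum_induce G (hKU.trans hUW)

lemma alphaNum_induce_mono {U W : Finset V} (hUW : U ⊆ W) :
    alphaNum (G.induce (U : Set V)) ≤ alphaNum (G.induce (W : Set V)) := by
  simpa only [alphaNum, omegaNum, compl_induce] using omegaNum_induce_mono Gᶜ hUW

lemma omegaNum_induce_add_le_of_completeTo {U W : Finset V} (hUW : Disjoint U W)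
    (h : CompleteTo G U W) :
    omegaNum (G.induce (U : Set V)) + omegaNum (G.induce (W : Set V)) ≤
      omegaNum (G.induce ((U ∪ W : Finset V) : Set V)) := by
  obtain ⟨K₁, hK₁U, hK₁⟩ := exists_isNClique_omegaNum_induce G U
  obtain ⟨K₂, hK₂W, hK₂⟩ := exists_isNClique_omegaNum_induce G W
  have hK : G.IsClique ((K₁ ∪ K₂ : Finset V) : Set V) := by
    rw [coe_union]
    exact Set.pairwise_union.2 ⟨hK₁.isClique, hK₂.isClique, fun x hx y hy _ =>
      ⟨h x (hK₁U hx) y (hK₂W hy), (h x (hK₁U hx) y (hK₂W hy)).symm⟩⟩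
  rw [← hK₁.card_eq, ← hK₂.card_eq, ← card_union_of_disjoint (hUW.mono hK₁U hK₂W)]
  exact hK.card_le_omegaNum_induce G (union_subset_union hK₁U hK₂W)

lemma kappaNum_induce_add_le_of_completeTo {U W : Finset V} (hUW : Disjoint U W)
    (h : CompleteTo G U W) :
    kappaNum (G.induce (U : Set V)) + kappaNum (G.induce (W : Set V)) ≤
      kappaNum (G.induce ((U ∪ W : Finset V) : Set V)) := by
  have hαU := alphaNum_induce_mono G (subset_union_left : U ⊆ U ∪ W)
  have hαW := alphaNum_induce_mono G (subset_union_right : W ⊆ U ∪ W)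
  have hω := omegaNum_induce_add_le_of_completeTo G hUW h
  unfold kappaNum
  calc _ ≤ alphaNum (G.induce ((U ∪ W : Finset V) : Set V)) * omegaNum (G.induce (U : Set V)) +
        alphaNum (G.induce ((U ∪ W : Finset V) : Set V)) * omegaNum (G.induce (W : Set V)) := by
        gcongr
    _ ≤ _ := by rw [← mul_add]; gcongr

lemma kappaNum_induce_add_le_of_anticompleteTo {U W : Finset V} (hUW : Disjoint U W)
    (h : AnticompleteTo G U W) :
    kappaNum (G.induce (U : Set V)) + kappaNum (G.induce (W : Set V)) ≤
      kappaNum (G.induce ((U ∪ W : Finset V) : Set V)) := by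
  have h' : CompleteTo Gᶜ U W := fun x hx y hy =>
    (compl_adj G x y).2 ⟨fun hxy => disjoint_left.1 hUW hx (hxy ▸ hy), h x hx y hy⟩
  simpa only [kappaNum_compl_induce] using kappaNum_induce_add_le_of_completeTo Gᶜ hUW h'

end Kappa

section Blockade

variable {V ι : Type*} [DecidableEq V] (G : SimpleGraph V) {B : ι → Finset V}

lemma completeTo_biUnion {X Y : Finset ι} (h : ∀ i ∈ X, ∀ j ∈ Y, CompleteTo G (B i) (B j)) :
    CompleteTo G (X.biUnion B) (Y.biUnion B) := by
  simp only [CompleteTo, mem_biUnion, forall_exists_index, and_imp]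
  exact fun x i hi hx y j hj hy => h i hi j hj x hx y hy

lemma anticompleteTo_biUnion {X Y : Finset ι}
    (h : ∀ i ∈ X, ∀ j ∈ Y, AnticompleteTo G (B i) (B j)) :
    AnticompleteTo G (X.biUnion B) (Y.biUnion B) := by
  simp only [AnticompleteTo, mem_biUnion, forall_exists_index, and_imp]
  exact fun x i hi hx y j hj hy => h i hi j hj x hx y hy

variable [Finite V] [DecidableEq ι]

theorem sum_kappaNum_induce_le_kappaNum_biUnion (H : SimpleGraph ι)
    (hdisj : Pairwise (Function.onFun Disjoint B))
    (hcomplete : ∀ i j, H.Adj i j → CompleteTo G (B i) (B j))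
    (hanti : ∀ i j, i ≠ j → ¬ H.Adj i j → AnticompleteTo G (B i) (B j))
    (I : Finset ι) (hI : ¬ HasInducedP4On H I) :
    ∑ i ∈ I, kappaNum (G.induce (B i : Set V)) ≤
      kappaNum (G.induce ((I.biUnion B : Finset V) : Set V)) := by
  induction I using strongInduction with
  | H I ih =>
  rcases Nat.lt_or_ge 1 #I with hI1 | hI1
  · obtain ⟨X, hX⟩ := exists_isAnticompleteSplit_of_not_hasInducedP4On hI1 hI
    have hXI : X ⊂ I := hX.elim (·.2.1) (·.2.1)
    have hYI : I \ X ⊂ I := sdiff_ssubset hXI.subset (hX.elim (·.1) (·.1))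
    have hne {i j : ι} (hi : i ∈ X) (hj : j ∈ I \ X) : i ≠ j := by
      rintro rfl; exact (mem_sdiff.1 hj).2 hi
    have hdisjXY : Disjoint (X.biUnion B) ((I \ X).biUnion B) := by
      rw [disjoint_biUnion_left]
      intro i hi
      rw [disjoint_biUnion_right]
      exact fun j hj => hdisj (hne hi hj)
    have hunion : kappaNum (G.induce ((X.biUnion B : Finset V) : Set V)) +
        kappaNum (G.induce (((I \ X).biUnion B : Finset V) : Set V)) ≤
        kappaNum (G.induce ((I.biUnion B : Finset V) : Set V)) := by
      rw [← union_sdiff_of_subset hXI.subset, union_biUnion, union_sdiff_of_subset hXI.subset]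
      rcases hX with hX | hX
      · refine kappaNum_induce_add_le_of_anticompleteTo G hdisjXY (anticompleteTo_biUnion G ?_)
        exact fun i hi j hj => hanti i j (hne hi hj) (hX.2.2 i hi j hj)
      · refine kappaNum_induce_add_le_of_completeTo G hdisjXY (completeTo_biUnion G ?_)
        refine fun i hi j hj => hcomplete i j ?_
        simpa [hne hi hj] using hX.2.2 i hi j hj
    calc _ = ∑ i ∈ X, kappaNum (G.induce (B i : Set V)) +
          ∑ i ∈ I \ X, kappaNum (G.induce (B i : Set V)) := by
          rw [add_comm, sum_sdiff hXI.subset]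
      _ ≤ _ := (add_le_add (ih X hXI fun h => hI (h.mono hXI.subset))
          (ih _ hYI fun h => hI (h.mono hYI.subset))).trans hunion
  · rcases Nat.le_one_iff_eq_zero_or_eq_one.1 hI1 with hI0 | hI1
    · simp [card_eq_zero.1 hI0]
    · obtain ⟨i, rfl⟩ := card_eq_one.1 hI1
      rw [sum_singleton, singleton_biUnion]

end Blockade

theorem stmt_11_general {V : Type*} [Fintype V] (G : SimpleGraph V)
    (τ : ℝ) (hτ : 0 < τ) (hG : TauCritical τ G) (t : ℕ) (ht : 0 < t) :
    ¬ ∃ B : Fin t → Finset V,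
        Pairwise (Function.onFun Disjoint B) ∧
        (∀ i j, i ≠ j → CompleteTo G (B i) (B j) ∨ AnticompleteTo G (B i) (B j)) ∧
        ¬ Nonempty (pathGraph 4 ↪g blockadePattern G B) ∧
        (∀ i, (Fintype.card V : ℝ) * (t : ℝ) ^ (-(1 / τ)) ≤ ((B i).card : ℝ)) ∧
        (∀ i, B i ≠ Finset.univ) := by
  classical
  rintro ⟨B, hdisj, hpure, hP4, hwidth, hproper⟩
  set n : ℝ := (Fintype.card V : ℝ)
  have hsum : ∑ i, kappaNum (G.induce (B i : Set V)) ≤ kappaNum G :=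
    (sum_kappaNum_induce_le_kappaNum_biUnion G (blockadePattern G B) hdisj (fun _ _ h => h.2)
      (fun i j hij h => (hpure i j hij).resolve_left fun hc => h ⟨hij, hc⟩) univ
      fun h => hP4 h.nonempty_embedding).trans (kappaNum_induce_le G _)
  have hblock (i : Fin t) : n ^ τ / t ≤ kappaNum (G.induce (B i : Set V)) := calc
    n ^ τ / t = (n * (t : ℝ) ^ (-(1 / τ))) ^ τ := by
      rw [Real.mul_rpow (by positivity) (by positivity), ← Real.rpow_mul (by positivity),
        neg_mul, one_div_mul_cancel hτ.ne', Real.rpow_neg_one, div_eq_mul_inv]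
    _ ≤ (#(B i) : ℝ) ^ τ := Real.rpow_le_rpow (by positivity) (hwidth i) hτ.le
    _ ≤ kappaNum (G.induce (B i : Set V)) := hG.2 (B i) (hproper i)
  refine hG.1.not_ge ?_
  calc n ^ τ = ∑ _i : Fin t, n ^ τ / t := by
        rw [sum_const, card_univ, Fintype.card_fin, nsmul_eq_mul]
        field_simp
    _ ≤ ∑ i, (kappaNum (G.induce (B i : Set V)) : ℝ) := sum_le_sum fun i _ => hblock i
    _ ≤ kappaNum G := mod_cast hsum

/-- In a `τ`-critical graph there is no pure blockade with a cograph pattern of length `t`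
and width at least `|G| t^{-1/τ}` with every block a proper subset of `V(G)`. -/
theorem stmt_11 {V : Type*} [Fintype V] [DecidableEq V] (G : SimpleGraph V)
    (τ : ℝ) (hτ : 0 < τ) (hG : TauCritical τ G) (t : ℕ) (ht : 0 < t) :
    ¬ ∃ B : Fin t → Finset V,
        Pairwise (Function.onFun Disjoint B) ∧
        (∀ i j, i ≠ j → CompleteTo G (B i) (B j) ∨ AnticompleteTo G (B i) (B j)) ∧
        ¬ Nonempty (pathGraph 4 ↪g blockadePattern G B) ∧
        (∀ i, (Fintype.card V : ℝ) * (t : ℝ) ^ (-(1 / τ)) ≤ ((B i).card : ℝ)) ∧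
        (∀ i, B i ≠ Finset.univ) :=
  stmt_11_general G τ hτ hG t ht
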